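/- arXiv:2103.04296 — 4 statements merged into one kernel-verified Lean document; each statement's English description precedes it below -/
import Mathlib

section
/- (Autonne–Takagi factorization) For every symmetric complex n×n matrix A, there exists a unitary matrix U such that U A Uᵀ is diagonal with nonnegative real diagonal entries. -/
open Matrix Complex

set_option maxHeartbeats 1000000



variable {𝕜 : Type*} [RCLike 𝕜] {n : Type*} [Fintype n] [DecidableEq n]

/-- If the rows of a matrix built from an orthonormal basis are eigenvectors of `A`,
then conjugating `A` diagonalizes it. -/
theorem diag_of_eigenbasis (A : Matrix n n 𝕜) (b : OrthonormalBasis n 𝕜 (EuclideanSpace 𝕜 n))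
    (c : n → 𝕜) (h : ∀ j, A *ᵥ ⇑(b j) = c j • ⇑(b j)) :
    star ((EuclideanSpace.basisFun n 𝕜).toBasis.toMatrix b.toBasis) * A *
      ((EuclideanSpace.basisFun n 𝕜).toBasis.toMatrix b.toBasis) = diagonal c := by
  set U : Matrix n n 𝕜 := (EuclideanSpace.basisFun n 𝕜).toBasis.toMatrix b.toBasis with hU
  have hUmem : U ∈ Matrix.unitaryGroup n 𝕜 :=
    (EuclideanSpace.basisFun n 𝕜).toMatrix_orthonormalBasis_mem_unitary b
  have hUapp : ∀ i j, U i j = b j i := fun i j => rfl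
  have hUmul : ∀ j, U *ᵥ Pi.single j 1 = ⇑(b j) := by
    intro j; simp only [mulVec_single_one]; ext i; exact hUapp i j
  have hstar : ∀ j, star U *ᵥ ⇑(b j) = Pi.single j 1 := by
    intro j
    rw [← hUmul, mulVec_mulVec, hUmem.1, one_mulVec]
  apply Matrix.toEuclideanLin.injective
  apply Module.Basis.ext (EuclideanSpace.basisFun n 𝕜).toBasis
  intro i
  simp only [toLpLin_apply, OrthonormalBasis.coe_toBasis, EuclideanSpace.basisFun_apply,
    PiLp.ofLp_single, ← mulVec_mulVec, hUmul, h, Matrix.diagonal_mulVec_single, mulVec_smul,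
    hstar, WithLp.toLp_smul, PiLp.toLp_single, mul_one]
  apply PiLp.ext
  intro j
  simp only [PiLp.smul_apply, PiLp.single_apply, smul_eq_mul, mul_ite, mul_one, mul_zero]

/-- Commuting real symmetric matrices are simultaneously orthogonally diagonalizable. -/
theorem simul_diag {m : ℕ} (X Y : Matrix (Fin m) (Fin m) ℝ) (hX : X.IsHermitian)
    (hY : Y.IsHermitian) (hXY : X * Y = Y * X) :
    ∃ O ∈ Matrix.unitaryGroup (Fin m) ℝ, ∃ x y : Fin m → ℝ,
      O * X * star O = diagonal x ∧ O * Y * star O = diagonal y := by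
  have hTX : (Matrix.toEuclideanLin X).IsSymmetric := (isHermitian_iff_isSymmetric).mp hX
  have hTY : (Matrix.toEuclideanLin Y).IsSymmetric := (isHermitian_iff_isSymmetric).mp hY
  have hcomm : Commute (Matrix.toEuclideanLin X) (Matrix.toEuclideanLin Y) := by
    have h1 : Matrix.toEuclideanLin (X * Y) = Matrix.toEuclideanLin (Y * X) := by rw [hXY]
    simpa only [Commute, SemiconjBy, Matrix.toEuclideanLin_eq_toLin,
      Matrix.toLin_mul _ (PiLp.basisFun 2 ℝ (Fin m)) _, Module.End.mul_eq_comp] using h1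
  set V : ℝ × ℝ → Submodule ℝ (EuclideanSpace ℝ (Fin m)) := fun p =>
    Module.End.eigenspace (Matrix.toEuclideanLin X) p.2 ⊓
      Module.End.eigenspace (Matrix.toEuclideanLin Y) p.1 with hVdef
  have hV : DirectSum.IsInternal V :=
    LinearMap.IsSymmetric.directSum_isInternal_of_commute hTX hTY hcomm
  have hV' := LinearMap.IsSymmetric.orthogonalFamily_eigenspace_inf_eigenspace hTX hTY
  have hfin : {p : ℝ × ℝ | V p ≠ ⊥}.Finite :=
    WellFoundedGT.finite_ne_bot_of_iSupIndep hV.submodule_iSupIndep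
  haveI : Fintype {p : ℝ × ℝ // V p ≠ ⊥} := hfin.fintype
  have hV₀ : DirectSum.IsInternal (fun p : {p : ℝ × ℝ // V p ≠ ⊥} => V p) :=
    DirectSum.isInternal_ne_bot_iff.mpr hV
  have hV₀' : OrthogonalFamily ℝ (fun p : {p : ℝ × ℝ // V p ≠ ⊥} => V p)
      (fun p => (V p.1).subtypeₗᵢ) := hV'.comp Subtype.coe_injective
  have hn : Module.finrank ℝ (EuclideanSpace ℝ (Fin m)) = m := finrank_euclideanSpace_fin
  let b := hV₀.subordinateOrthonormalBasis hn hV₀'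
  let idx0 : Fin m → {p : ℝ × ℝ // V p ≠ ⊥} := fun a =>
    hV₀.subordinateOrthonormalBasisIndex hn a hV₀'
  let idx : Fin m → ℝ × ℝ := fun a => (idx0 a : ℝ × ℝ)
  have hmem : ∀ a, b a ∈ V (idx a) :=
    fun a => hV₀.subordinateOrthonormalBasis_subordinate hn a hV₀'
  have keyX : ∀ a, X *ᵥ ⇑(b a) = (idx a).2 • ⇑(b a) := by
    intro a
    have h2 := Module.End.mem_eigenspace_iff.mp (hmem a).1
    simpa only [toEuclideanLin_apply, WithLp.ofLp_smul] using congr(⇑$(h2))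
  have keyY : ∀ a, Y *ᵥ ⇑(b a) = (idx a).1 • ⇑(b a) := by
    intro a
    have h2 := Module.End.mem_eigenspace_iff.mp (hmem a).2
    simpa only [toEuclideanLin_apply, WithLp.ofLp_smul] using congr(⇑$(h2))
  set U : Matrix (Fin m) (Fin m) ℝ := (EuclideanSpace.basisFun (Fin m) ℝ).toBasis.toMatrix b.toBasis with hU
  have hUmem : U ∈ Matrix.unitaryGroup (Fin m) ℝ :=
    (EuclideanSpace.basisFun (Fin m) ℝ).toMatrix_orthonormalBasis_mem_unitary b
  refine ⟨star U, Unitary.star_mem hUmem, fun a => (idx a).2, fun a => (idx a).1, ?_, ?_⟩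
  · rw [star_star]; exact diag_of_eigenbasis X b _ keyX
  · rw [star_star]; exact diag_of_eigenbasis Y b _ keyY

/-- Autonne–Takagi factorization: every symmetric complex matrix `A` admits a unitary `U`
such that `U A Uᵀ` is diagonal with nonnegative real diagonal entries. -/
theorem stmt_2 (n : ℕ) (A : Matrix (Fin n) (Fin n) ℂ) (hA : Aᵀ = A) :
    ∃ U : Matrix (Fin n) (Fin n) ℂ, U ∈ Matrix.unitaryGroup (Fin n) ℂ ∧
      ∃ d : Fin n → ℝ, (∀ i, 0 ≤ d i) ∧
        U * A * Uᵀ = Matrix.diagonal (fun i => (d i : ℂ)) := by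
  classical
  have hH : (A * Aᴴ).IsHermitian := isHermitian_mul_conjTranspose_self A
  set V : Matrix (Fin n) (Fin n) ℂ := (hH.eigenvectorUnitary : Matrix (Fin n) (Fin n) ℂ) with hVdef
  have hVmem : V ∈ Matrix.unitaryGroup (Fin n) ℂ := hH.eigenvectorUnitary.2
  set μ : Fin n → ℝ := hH.eigenvalues with hμdef
  have hsp : star V * (A * Aᴴ) * V = diagonal (fun i => (μ i : ℂ)) :=
    by simpa [Unitary.conjStarAlgAut_apply, Function.comp_def] using hH.conjStarAlgAut_star_eigenvectorUnitary
  set U₀ : Matrix (Fin n) (Fin n) ℂ := star V with hU₀def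
  have hU₀mem : U₀ ∈ Matrix.unitaryGroup (Fin n) ℂ := Unitary.star_mem hVmem
  set B : Matrix (Fin n) (Fin n) ℂ := U₀ * A * U₀ᵀ with hBdef
  have hBsym : Bᵀ = B := by
    rw [hBdef, transpose_mul, transpose_mul, transpose_transpose, hA, mul_assoc]
  have h1 : U₀ᵀ * (U₀ᵀ)ᴴ = 1 := by
    have h0 : U₀ᴴ * U₀ = 1 := hU₀mem.1
    have : (U₀ᴴ * U₀)ᵀ = (1 : Matrix (Fin n) (Fin n) ℂ)ᵀ := by rw [h0]
    have hct : (U₀ᴴ)ᵀ = (U₀ᵀ)ᴴ := Matrix.ext fun i j => rfl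
    rwa [transpose_mul, transpose_one, hct] at this
  have hBB : B * Bᴴ = diagonal (fun i => (μ i : ℂ)) := by
    calc B * Bᴴ = U₀ * A * (U₀ᵀ * ((U₀ᵀ)ᴴ * (Aᴴ * U₀ᴴ))) := by
          rw [hBdef, conjTranspose_mul, conjTranspose_mul]; simp only [mul_assoc]
      _ = U₀ * (A * Aᴴ) * U₀ᴴ := by rw [← mul_assoc U₀ᵀ, h1, one_mul]; simp only [mul_assoc]
      _ = star V * (A * Aᴴ) * V := by rw [hU₀def]; simp [star_eq_conjTranspose]
      _ = diagonal (fun i => (μ i : ℂ)) := hsp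
  set X : Matrix (Fin n) (Fin n) ℝ := Matrix.of (fun i j => (B i j).re) with hXdef
  set Y : Matrix (Fin n) (Fin n) ℝ := Matrix.of (fun i j => (B i j).im) with hYdef
  have hBsym' : ∀ i j, B j i = B i j := fun i j => by
    simpa only [transpose_apply] using congrFun (congrFun hBsym i) j
  have hXsym : X.IsHermitian := Matrix.ext fun i j => by
    simp only [hXdef, conjTranspose_apply, of_apply, star_trivial, hBsym' i j]
  have hYsym : Y.IsHermitian := Matrix.ext fun i j => by
    simp only [hYdef, conjTranspose_apply, of_apply, star_trivial, hBsym' i j]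
  have hXY : X * Y = Y * X := by
    ext i j
    have h2 := congrArg (fun M => (M i j).im) hBB
    simp only [mul_apply, conjTranspose_apply, diagonal_apply] at h2
    rw [Complex.im_sum] at h2
    simp only [Complex.mul_im, Complex.conj_re, Complex.conj_im, apply_ite Complex.im,
      Complex.ofReal_im, Complex.zero_im, ite_self, mul_neg] at h2
    have h3 : ∑ k, ((B i k).im * (B j k).re) = ∑ k, ((B i k).re * (B j k).im) := by
      rw [Finset.sum_add_distrib] at h2
      have := add_eq_zero_iff_eq_neg.mp h2
      rw [← Finset.sum_neg_distrib] at this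
      simpa [neg_neg] using this.symm
    simp only [mul_apply, hXdef, hYdef, of_apply]
    calc ∑ k, (B i k).re * (B k j).im = ∑ k, (B i k).re * (B j k).im := by
          refine Finset.sum_congr rfl fun k _ => by rw [hBsym' k j]
      _ = ∑ k, (B i k).im * (B j k).re := h3.symm
      _ = ∑ k, (B i k).im * (B k j).re := by
          refine Finset.sum_congr rfl fun k _ => by rw [hBsym' k j]
  obtain ⟨O, hOmem, x, y, hOX, hOY⟩ := simul_diag X Y hXsym hYsym hXY
  -- complexify
  set W : Matrix (Fin n) (Fin n) ℂ := O.map (algebraMap ℝ ℂ) with hWdef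
  have hstarW : star W = (star O).map (algebraMap ℝ ℂ) := by
    ext i j
    simp [hWdef, conjTranspose_apply, star_trivial, Complex.conj_ofReal]
  have hWmem : W ∈ Matrix.unitaryGroup (Fin n) ℂ := by
    constructor
    · rw [hstarW, hWdef, ← Matrix.map_mul, hOmem.1, Matrix.map_one] <;> simp
    · rw [hstarW, hWdef, ← Matrix.map_mul, hOmem.2, Matrix.map_one] <;> simp
  have hWT : Wᵀ = (star O).map (algebraMap ℝ ℂ) := by
    ext i j
    simp [hWdef, conjTranspose_apply, star_trivial]
  set c : Fin n → ℂ := fun i => (x i : ℂ) + (y i : ℂ) * Complex.I with hcdef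
  have hBXY : B = X.map (algebraMap ℝ ℂ) + Complex.I • Y.map (algebraMap ℝ ℂ) := by
    ext i j
    apply Complex.ext <;>
      simp [hXdef, hYdef, Matrix.add_apply, Matrix.smul_apply, Complex.add_im, Complex.mul_im]
  have hWBW : W * B * Wᵀ = diagonal c := by
    have hx : W * X.map (algebraMap ℝ ℂ) * Wᵀ = (diagonal x).map (algebraMap ℝ ℂ) := by
      rw [hWT, hWdef, ← Matrix.map_mul, ← Matrix.map_mul, hOX]
    have hy : W * Y.map (algebraMap ℝ ℂ) * Wᵀ = (diagonal y).map (algebraMap ℝ ℂ) := by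
      rw [hWT, hWdef, ← Matrix.map_mul, ← Matrix.map_mul, hOY]
    rw [hBXY, mul_add, add_mul, mul_smul_comm, smul_mul_assoc, hx, hy]
    ext i j
    rcases eq_or_ne i j with rfl | hij
    · simp [Matrix.diagonal_map, diagonal_apply_eq, hcdef, Matrix.smul_apply, mul_comm]
    · simp [Matrix.map_apply, diagonal_apply_ne _ hij, Matrix.smul_apply]
  have hsq : ∀ i, ∃ p : ℂ, ‖p‖ = 1 ∧ p * p * c i = (‖c i‖ : ℂ) := by
    intro i
    rcases eq_or_ne (c i) 0 with h | h
    · exact ⟨1, by simp [h]⟩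
    · obtain ⟨s, hs⟩ := IsAlgClosed.exists_pow_nat_eq (c i) (n := 2) (by norm_num)
      have hs0 : s ≠ 0 := by
        intro h0; rw [h0] at hs; simp at hs; exact h hs.symm
      refine ⟨(starRingEnd ℂ) s / (‖s‖ : ℂ), ?_, ?_⟩
      · rw [norm_div]
        simp [hs0, norm_ne_zero_iff]
      · have hns : (‖s‖ : ℂ) ≠ 0 := by simpa [norm_ne_zero_iff] using hs0
        have hcs : (starRingEnd ℂ) s * s = (‖s‖ : ℂ) ^ 2 := by
          rw [mul_comm, Complex.mul_conj]
          norm_cast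
          rw [Complex.normSq_eq_norm_sq]
        have hcnorm : ‖c i‖ = ‖s‖ ^ 2 := by
          rw [← hs, norm_pow]
        rw [← hs]
        have hrw : (starRingEnd ℂ) s / (‖s‖ : ℂ) * ((starRingEnd ℂ) s / (‖s‖ : ℂ)) * s ^ 2
            = ((starRingEnd ℂ) s * s) ^ 2 / ((‖s‖ : ℂ)) ^ 2 := by ring
        rw [hrw, hcs, norm_pow]
        have hns' : ((‖s‖ : ℝ) : ℂ) ≠ 0 := hns
        push_cast
        field_simp [hns']
  choose p hp1 hp2 using hsq
  set P : Matrix (Fin n) (Fin n) ℂ := diagonal p with hPdef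
  have hpp : ∀ i : Fin n, p i * star (p i) = 1 := by
    intro i
    rw [Complex.star_def, Complex.mul_conj]
    norm_cast
    rw [Complex.normSq_eq_norm_sq, hp1 i]
    norm_num
  have hPmem : P ∈ Matrix.unitaryGroup (Fin n) ℂ := by
    constructor <;>
    · rw [hPdef, star_eq_conjTranspose, diagonal_conjTranspose, diagonal_mul_diagonal]
      convert Matrix.diagonal_one using 2
      ext i
      first
        | exact hpp i
        | rw [mul_comm]; exact hpp i
  refine ⟨P * (W * U₀), mul_mem hPmem (mul_mem hWmem hU₀mem), fun i => ‖c i‖, fun i => norm_nonneg _, ?_⟩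
  have hTfull : (P * (W * U₀))ᵀ = U₀ᵀ * (Wᵀ * P) := by
    rw [transpose_mul, transpose_mul, hPdef, diagonal_transpose, mul_assoc]
  rw [hTfull]
  calc P * (W * U₀) * A * (U₀ᵀ * (Wᵀ * P))
      = P * (W * (U₀ * A * U₀ᵀ) * Wᵀ) * P := by simp only [mul_assoc]
    _ = P * diagonal c * P := by rw [← hBdef, hWBW]
    _ = diagonal (fun i => p i * c i * p i) := by
        rw [hPdef, diagonal_mul_diagonal, diagonal_mul_diagonal]
    _ = diagonal (fun i => (‖c i‖ : ℂ)) := by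
        refine congrArg diagonal (funext fun i => ?_)
        rw [← hp2 i]
        ring
end

section
/- Let R, S : Fin n → Fin n → Fin n → Fin n → ℂ satisfy S_{ikℓj} = R_{kjiℓ} − R_{ijkℓ} for all i,j,k,ℓ, the conjugate symmetry R_{ijkℓ} = conj(R_{jiℓk}), and R_{ijkℓ} + R_{kℓij} = 2c·δ_{iℓ}δ_{kj} with c ∈ ℝ. Then 2·R_{ijkℓ} = 2c·δ_{ij}δ_{kℓ} − S_{ikℓj} − conj(S_{jℓki}) for all i,j,k,ℓ. -/
/-- Equation (3.3): under the first Bianchi relation, the conjugate symmetry of the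
Chern curvature, and the constant real bisectional curvature identity, the curvature is
expressed in terms of derivatives of torsion:
`2 R_{ijkℓ} = 2c δ_{ij} δ_{kℓ} − S_{ikℓj} − conj(S_{jℓki})`. -/
theorem stmt_6 (n : ℕ) (c : ℝ)
    (R : Fin n → Fin n → Fin n → Fin n → ℂ)
    (S : Fin n → Fin n → Fin n → Fin n → ℂ)
    (hB1 : ∀ i j k l, S i k l j = R k j i l - R i j k l)
    (hconj : ∀ i j k l, R i j k l = (starRingEnd ℂ) (R j i l k))
    (hsym : ∀ i j k l, R i j k l + R k l i j =
      2 * (c : ℂ) * (if i = l then 1 else 0) * (if k = j then 1 else 0)) :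
    ∀ i j k l, 2 * R i j k l =
      2 * (c : ℂ) * (if i = j then 1 else 0) * (if k = l then 1 else 0)
        - S i k l j - (starRingEnd ℂ) (S j l k i) := by
  intro i j k l
  have h1 := hB1 i j k l
  have h4 : (starRingEnd ℂ) (S j l k i) = R i l k j - R i j k l := by
    rw [hB1, map_sub, ← hconj, ← hconj]
  have h3 := hsym k j i l
  linear_combination h3 + h1 + h4
end

section
/- Let R, S : Fin n → Fin n → Fin n → Fin n → ℂ satisfy S_{ikℓj} = R_{kjiℓ} − R_{ijkℓ} and R_{ijkℓ} + R_{kℓij} = 0 for all indices (the case c = 0). Then the curvature is expressed by 2R_{ijkℓ} = −S_{ikℓj} − conj(S_{jℓki}) (given conjugate symmetry R_{ijkℓ} = conj(R_{jiℓk})), and consequently: if S ≡ 0 then R ≡ 0. -/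
/-- The case `c = 0`: with the first Bianchi relation, `R_{ijkℓ} + R_{kℓij} = 0`, and
conjugate symmetry, the curvature is given by `2 R_{ijkℓ} = −S_{ikℓj} − conj(S_{jℓki})`;
consequently, if `S ≡ 0` then `R ≡ 0` (Chern flatness). -/
theorem stmt_7 (n : ℕ)
    (R : Fin n → Fin n → Fin n → Fin n → ℂ)
    (S : Fin n → Fin n → Fin n → Fin n → ℂ)
    (hB1 : ∀ i j k l, S i k l j = R k j i l - R i j k l)
    (hsym : ∀ i j k l, R i j k l + R k l i j = 0)
    (hconj : ∀ i j k l, R i j k l = (starRingEnd ℂ) (R j i l k)) :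
    (∀ i j k l, 2 * R i j k l = - S i k l j - (starRingEnd ℂ) (S j l k i)) ∧
    ((∀ i j k l, S i k l j = 0) → ∀ i j k l, R i j k l = 0) := by
  have key : ∀ i j k l, 2 * R i j k l = - S i k l j - (starRingEnd ℂ) (S j l k i) := by
    intro i j k l
    have h1 := hB1 i j k l
    have h2 := hB1 j i l k
    have hc : (starRingEnd ℂ) (S j l k i) = R i l k j - R i j k l := by
      rw [h2, map_sub, ← hconj, ← hconj]
    have h3 := hsym k j i l
    rw [h1, hc]
    linear_combination h3
  refine ⟨key, fun hS i j k l => ?_⟩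
  have := key i j k l
  rw [hS, hS, map_zero] at this
  linear_combination this / 2
end

section
/- Suppose families R, S, T, U over Fin n satisfy: (i) the second Bianchi identity in the form R_{ijkℓ;m} − R_{mjkℓ;i} = Σ_r T^r_{im} R_{rjkℓ}; (ii) the c = 0 curvature formula 2R_{ijkℓ;m} = −U_{ikℓjm} − V_{jℓkim} where U_{ikℓjm} := T^ℓ_{ik,\bar j m} and V_{jℓkim} := conj(T^k_{jℓ,\bar i\bar m}); (iii) the commutation formula conj(T^k_{jℓ,\bar m\bar i}) − conj(T^k_{jℓ,\bar i\bar m}) = −Σ_r T^r_{im} conj(T^k_{jℓ,\bar r}); and (iv) 2R_{rjkℓ} = −T^ℓ_{rk,\bar j} − conj(T^k_{jℓ,\bar r}). Then T^ℓ_{mk,\bar j i} − T^ℓ_{ik,\bar j m} = −Σ_{r=1}^{n} T^r_{im} · T^ℓ_{rk,\bar j} for all indices. -/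
/-- Equation (3.7): combining the second Bianchi identity, the `c = 0` curvature formula,
and the commutation rule for antiholomorphic second derivatives of torsion yields
`T^ℓ_{mk,\bar j i} − T^ℓ_{ik,\bar j m} = −Σ_r T^r_{im} T^ℓ_{rk,\bar j}`.
Here `Rd i j k l m = R_{i\bar j k \bar ℓ; m}`, `T r i m = T^r_{im}`,
`D i k l j = T^ℓ_{ik,\bar j}`, `U5 i k l j m = T^ℓ_{ik,\bar j m}`, and
`C j l k i m = T^k_{jℓ,\bar i \bar m}`. -/
theorem stmt_9 (n : ℕ)
    (R : Fin n → Fin n → Fin n → Fin n → ℂ)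
    (Rd : Fin n → Fin n → Fin n → Fin n → Fin n → ℂ)
    (T : Fin n → Fin n → Fin n → ℂ)
    (D : Fin n → Fin n → Fin n → Fin n → ℂ)
    (U5 : Fin n → Fin n → Fin n → Fin n → Fin n → ℂ)
    (C : Fin n → Fin n → Fin n → Fin n → Fin n → ℂ)
    (hB2 : ∀ i j k l m, Rd i j k l m - Rd m j k l i = ∑ r, T r i m * R r j k l)
    (hRd : ∀ i j k l m, 2 * Rd i j k l m = - U5 i k l j m - (starRingEnd ℂ) (C j l k i m))
    (hcomm : ∀ i j k l m,
      (starRingEnd ℂ) (C j l k m i) - (starRingEnd ℂ) (C j l k i m)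
        = - ∑ r, T r i m * (starRingEnd ℂ) (D j l k r))
    (hR : ∀ r j k l, 2 * R r j k l = - D r k l j - (starRingEnd ℂ) (D j l k r)) :
    ∀ i j k l m, U5 m k l j i - U5 i k l j m = - ∑ r, T r i m * D r k l j := by
  intro i j k l m
  have hs : (2:ℂ) * ∑ r, T r i m * R r j k l
      = - ∑ r, T r i m * D r k l j - ∑ r, T r i m * (starRingEnd ℂ) (D j l k r) := by
    rw [Finset.mul_sum, ← Finset.sum_neg_distrib, ← Finset.sum_sub_distrib]
    exact Finset.sum_congr rfl fun r _ => by linear_combination T r i m * hR r j k l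
  linear_combination 2 * hB2 i j k l m - hRd i j k l m + hRd m j k l i
    - hcomm i j k l m + hs
end
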